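/- Royden's lemma (nonpositive bound case): Let V be a complex inner product space and let S be a symmetric bihermitian form on V. Suppose there is a real constant K ≤ 0 such that S(ζ,ζ,ζ,ζ) ≤ K‖ζ‖⁴ for every ζ ∈ V. Then for any finite family ζ₁,…,ζ_ν (ν ≥ 1) of pairwise orthogonal vectors in V, one has Σ_{α,β=1}^{ν} S(ζ_α, ζ_α, ζ_β, ζ_β) ≤ ((ν+1)/(2ν))·K·(Σ_{α=1}^{ν} ‖ζ_α‖²)². -/

import Mathlib

/-!
Expand `S(Z, Z, Z, Z)` for `Z = ∑ₐ εₐ ζₐ` with phases `εₐ ∈ {±1, ±i}` and average over all `4^ν`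
choices of phases: a coefficient `ε_a ε̄_b ε_c ε̄_d` averages to zero unless `{a, c} = {b, d}`, so
by symmetry the average is `2 ∑_{α,β} S(ζ_α, ζ_α, ζ_β, ζ_β) - ∑_α S(ζ_α, ζ_α, ζ_α, ζ_α)`. By
orthogonality every `Z` has `‖Z‖² = ∑ₐ ‖ζₐ‖²`, so the hypothesis bounds the average by
`K (∑ₐ ‖ζₐ‖²)²`. The diagonal terms are at most `K ∑ₐ ‖ζₐ‖⁴ ≤ (K/ν) (∑ₐ ‖ζₐ‖²)²` by
Cauchy–Schwarz, as `K ≤ 0`; adding the two bounds gives the claim.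
-/

open Finset ComplexConjugate

lemma forall_sub_add_sub_eq_zero_iff {ι R : Type*} [Ring R] (h2 : (2 : R) ≠ 0) {a b c d : ι} :
    (∀ x : ι → R, x a - x b + x c - x d = 0) ↔ (a = b ∧ c = d) ∨ (a = d ∧ b = c) := by
  classical
  have h1 : (1 : R) ≠ 0 := fun h => h2 (by rw [← one_add_one_eq_two, h, add_zero])
  refine ⟨fun h => ?_, ?_⟩
  · have hc := h (Pi.single c 1)
    by_cases hab : a = b
    · subst hab
      by_cases hcd : c = d
      · exact .inl ⟨rfl, hcd⟩
      · simp [Pi.single_apply, Ne.symm hcd] at hc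
        exact absurd hc h1
    by_cases had : a = d
    · subst had
      by_cases hbc : b = c
      · exact .inr ⟨rfl, hbc⟩
      · simp [Pi.single_apply, hbc] at hc
        exact absurd hc h1
    · have ha := h (Pi.single a 1)
      by_cases hca : c = a <;> simp [hca, Ne.symm hab, Ne.symm had] at ha
      · exact absurd (one_add_one_eq_two.symm.trans ha) h2
      · exact absurd ha h1
  · rintro (⟨rfl, rfl⟩ | ⟨rfl, rfl⟩) x <;> abel

lemma AddChar.sum_mul_conj_mul_mul_conj {ι R : Type*} [Fintype ι] [DecidableEq ι] [Ring R]
    [Fintype R] (h2 : (2 : R) ≠ 0) {ψ : AddChar R ℂ} (hψ : Function.Injective ψ)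
    (a b c d : ι) :
    ∑ x : ι → R, ψ (x a) * conj (ψ (x b)) * ψ (x c) * conj (ψ (x d)) =
      if (a = b ∧ c = d) ∨ (a = d ∧ b = c) then (Fintype.card R : ℂ) ^ Fintype.card ι else 0 := by
  let L : (ι → R) →+ R := Pi.evalAddMonoidHom (fun _ => R) a - Pi.evalAddMonoidHom (fun _ => R) b
    + Pi.evalAddMonoidHom (fun _ => R) c - Pi.evalAddMonoidHom (fun _ => R) d
  have hL (x : ι → R) :
      ψ (x a) * conj (ψ (x b)) * ψ (x c) * conj (ψ (x d)) = ψ.compAddMonoidHom L x := by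
    simp [L, ← AddChar.map_neg_eq_conj, ← AddChar.map_add_eq_mul, sub_eq_add_neg]
  have htriv : ψ.compAddMonoidHom L = 0 ↔ (a = b ∧ c = d) ∨ (a = d ∧ b = c) := by
    rw [← forall_sub_add_sub_eq_zero_iff h2, AddChar.ext_iff]
    simp only [AddChar.compAddMonoidHom_apply, AddChar.zero_apply]
    refine forall_congr' fun x => ?_
    rw [← ψ.map_zero_eq_one, hψ.eq_iff]
    rfl
  simp_rw [hL, AddChar.sum_eq_ite, htriv]
  simp

lemma sum_ite_pairing {ι M : Type*} [Fintype ι] [DecidableEq ι] [AddCommGroup M]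
    (f : ι → ι → ι → ι → M) :
    ∑ a, ∑ b, ∑ c, ∑ d, (if (a = b ∧ c = d) ∨ (a = d ∧ b = c) then f a b c d else 0) =
      ∑ a, ∑ c, f a a c c + ∑ a, ∑ b, f a b b a - ∑ a, f a a a a := by
  have hite (p q : Prop) [Decidable p] [Decidable q] (m : M) : (if p ∨ q then m else 0) =
      (if p then m else 0) + (if q then m else 0) - if p ∧ q then m else 0 := by
    by_cases hp : p <;> by_cases hq : q <;> simp [hp, hq]
  simp [hite, sum_add_distrib, sum_sub_distrib, ite_and]

lemma norm_sum_smul_sq_of_pairwise_inner_eq_zero {ι 𝕜 E : Type*} [Fintype ι] [RCLike 𝕜]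
    [NormedAddCommGroup E] [InnerProductSpace 𝕜 E] (c : ι → 𝕜) {v : ι → E}
    (hv : Pairwise fun i j => inner 𝕜 (v i) (v j) = 0) :
    ‖∑ i, c i • v i‖ ^ 2 = ∑ i, ‖c i‖ ^ 2 * ‖v i‖ ^ 2 := by
  classical
  have hinner (i j : ι) : inner 𝕜 (c i • v i) (c j • v j) =
      if i = j then ((‖c i‖ ^ 2 * ‖v i‖ ^ 2 : ℝ) : 𝕜) else 0 := by
    split_ifs with h
    · subst h
      rw [inner_smul_left, inner_smul_right, inner_self_eq_norm_sq_to_K, ← mul_assoc,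
        RCLike.conj_mul]
      push_cast; ring
    · simp [inner_smul_left, inner_smul_right, hv h]
  rw [@norm_sq_eq_re_inner 𝕜, sum_inner]
  simp only [inner_sum, hinner, sum_ite_eq, mem_univ, if_true, map_sum, RCLike.ofReal_re]

/-- `ZMod.stdAddChar` on `ZMod 4` is `k ↦ iᵏ`, so these are the combinations `∑ₐ εₐ vₐ` with
phases `εₐ ∈ {±1, ±i}`. -/
noncomputable def phaseSum {V ι : Type*} [AddCommGroup V] [Module ℂ V] [Fintype ι]
    (v : ι → V) (x : ι → ZMod 4) : V :=
  ∑ a, ZMod.stdAddChar (x a) • v a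

structure IsSesquilinear₄ {V : Type*} [AddCommGroup V] [Module ℂ V] (S : V → V → V → V → ℂ) :
    Prop where
  linear₁ : ∀ η σ ω, IsLinearMap ℂ fun ζ => S ζ η σ ω
  linear₃ : ∀ ζ η ω, IsLinearMap ℂ fun σ => S ζ η σ ω
  add₂ : ∀ ζ σ ω η₁ η₂, S ζ (η₁ + η₂) σ ω = S ζ η₁ σ ω + S ζ η₂ σ ω
  smul₂ : ∀ ζ σ ω (c : ℂ) η, S ζ (c • η) σ ω = conj c * S ζ η σ ω
  add₄ : ∀ ζ η σ ω₁ ω₂, S ζ η σ (ω₁ + ω₂) = S ζ η σ ω₁ + S ζ η σ ω₂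
  smul₄ : ∀ ζ η σ (c : ℂ) ω, S ζ η σ (c • ω) = conj c * S ζ η σ ω

namespace IsSesquilinear₄

variable {V ι : Type*} [AddCommGroup V] [Module ℂ V] {S : V → V → V → V → ℂ}

lemma map_sum₁ (hS : IsSesquilinear₄ S) (s : Finset ι) (f : ι → V) (η σ ω : V) :
    S (∑ a ∈ s, f a) η σ ω = ∑ a ∈ s, S (f a) η σ ω :=
  map_sum (IsLinearMap.mk' _ (hS.linear₁ η σ ω)) f s

lemma map_sum₂ (hS : IsSesquilinear₄ S) (s : Finset ι) (f : ι → V) (ζ σ ω : V) :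
    S ζ (∑ a ∈ s, f a) σ ω = ∑ a ∈ s, S ζ (f a) σ ω :=
  map_sum (AddMonoidHom.mk' (S ζ · σ ω) (hS.add₂ ζ σ ω)) f s

lemma map_sum₃ (hS : IsSesquilinear₄ S) (s : Finset ι) (f : ι → V) (ζ η ω : V) :
    S ζ η (∑ a ∈ s, f a) ω = ∑ a ∈ s, S ζ η (f a) ω :=
  map_sum (IsLinearMap.mk' _ (hS.linear₃ ζ η ω)) f s

lemma map_sum₄ (hS : IsSesquilinear₄ S) (s : Finset ι) (f : ι → V) (ζ η σ : V) :
    S ζ η σ (∑ a ∈ s, f a) = ∑ a ∈ s, S ζ η σ (f a) :=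
  map_sum (AddMonoidHom.mk' (S ζ η σ ·) (hS.add₄ ζ η σ)) f s

lemma smul₁ (hS : IsSesquilinear₄ S) (c : ℂ) (ζ η σ ω : V) :
    S (c • ζ) η σ ω = c * S ζ η σ ω :=
  (hS.linear₁ η σ ω).map_smul c ζ

lemma smul₃ (hS : IsSesquilinear₄ S) (c : ℂ) (ζ η σ ω : V) :
    S ζ η (c • σ) ω = c * S ζ η σ ω :=
  (hS.linear₃ ζ η ω).map_smul c σ

lemma map_sum_smul (hS : IsSesquilinear₄ S) (s : Finset ι) (c : ι → ℂ) (v : ι → V) :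
    S (∑ a ∈ s, c a • v a) (∑ a ∈ s, c a • v a) (∑ a ∈ s, c a • v a) (∑ a ∈ s, c a • v a) =
      ∑ a ∈ s, ∑ b ∈ s, ∑ c' ∈ s, ∑ d ∈ s,
        c a * conj (c b) * c c' * conj (c d) * S (v a) (v b) (v c') (v d) := by
  simp only [hS.map_sum₁, hS.map_sum₂, hS.map_sum₃, hS.map_sum₄, hS.smul₁, hS.smul₂, hS.smul₃,
    hS.smul₄, mul_assoc, mul_left_comm]

lemma sum_phaseSum [Fintype ι] [DecidableEq ι] (hS : IsSesquilinear₄ S) (v : ι → V) :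
    ∑ x, S (phaseSum v x) (phaseSum v x) (phaseSum v x) (phaseSum v x) =
      4 ^ Fintype.card ι * (∑ a, ∑ c, S (v a) (v a) (v c) (v c) +
        ∑ a, ∑ b, S (v a) (v b) (v b) (v a) - ∑ a, S (v a) (v a) (v a) (v a)) := by
  calc _ = ∑ a, ∑ b, ∑ c, ∑ d,
        (∑ x : ι → ZMod 4, ZMod.stdAddChar (x a) * conj (ZMod.stdAddChar (x b)) *
          ZMod.stdAddChar (x c) * conj (ZMod.stdAddChar (x d))) * S (v a) (v b) (v c) (v d) := by
        simp only [phaseSum, hS.map_sum_smul, sum_mul]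
        rw [sum_comm]
        refine sum_congr rfl fun a _ => ?_
        rw [sum_comm]
        refine sum_congr rfl fun b _ => ?_
        rw [sum_comm]
        refine sum_congr rfl fun c _ => ?_
        rw [sum_comm]
    _ = _ := by
        simp only [AddChar.sum_mul_conj_mul_mul_conj (by decide : (2 : ZMod 4) ≠ 0)
          ZMod.injective_stdAddChar, ite_mul, zero_mul]
        rw [sum_ite_pairing]
        simp only [ZMod.card, mul_sub, mul_add, mul_sum]
        norm_num

end IsSesquilinear₄

lemma norm_phaseSum_sq {V ι : Type*} [NormedAddCommGroup V] [InnerProductSpace ℂ V] [Fintype ι]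
    {v : ι → V} (hv : Pairwise fun a b => inner ℂ (v a) (v b) = 0) (x : ι → ZMod 4) :
    ‖phaseSum v x‖ ^ 2 = ∑ a, ‖v a‖ ^ 2 := by
  simp [phaseSum, norm_sum_smul_sq_of_pairwise_inner_eq_zero _ hv, AddChar.norm_apply]

lemma IsSesquilinear₄.two_mul_sum_sub_sum_diag_re_le {V ι : Type*} [NormedAddCommGroup V]
    [InnerProductSpace ℂ V] [Fintype ι] [DecidableEq ι] {S : V → V → V → V → ℂ}
    (hS : IsSesquilinear₄ S) (hsym : ∀ ζ η σ ω, S ζ η σ ω = S σ η ζ ω) {K : ℝ}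
    (hbound : ∀ ζ, (S ζ ζ ζ ζ).re ≤ K * ‖ζ‖ ^ 4) {v : ι → V}
    (hv : Pairwise fun a b => inner ℂ (v a) (v b) = 0) :
    2 * ∑ a, ∑ b, (S (v a) (v a) (v b) (v b)).re - ∑ a, (S (v a) (v a) (v a) (v a)).re ≤
      K * (∑ a, ‖v a‖ ^ 2) ^ 2 := by
  have hswap : ∑ a, ∑ b, S (v a) (v b) (v b) (v a) = ∑ a, ∑ b, S (v a) (v a) (v b) (v b) := by
    rw [sum_comm]
    exact sum_congr rfl fun b _ => sum_congr rfl fun a _ => hsym _ _ _ _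
  have hexpand := hS.sum_phaseSum v
  rw [hswap, ← two_mul] at hexpand
  have hnorm4 (x : ι → ZMod 4) : ‖phaseSum v x‖ ^ 4 = (∑ a, ‖v a‖ ^ 2) ^ 2 := by
    rw [← norm_phaseSum_sq hv x]; ring
  refine le_of_mul_le_mul_left ?_ (by positivity : (0 : ℝ) < 4 ^ Fintype.card ι)
  calc _ = (∑ x, S (phaseSum v x) (phaseSum v x) (phaseSum v x) (phaseSum v x)).re := by
        have h4 : (4 : ℂ) ^ Fintype.card ι = ((4 ^ Fintype.card ι : ℝ) : ℂ) := by push_cast; rfl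
        rw [hexpand, h4, Complex.re_ofReal_mul]
        simp [Complex.re_sum]
    _ ≤ ∑ x : ι → ZMod 4, K * ‖phaseSum v x‖ ^ 4 := by
        rw [Complex.re_sum]; exact sum_le_sum fun x _ => hbound _
    _ = _ := by
        simp only [hnorm4, sum_const, card_univ, Fintype.card_fun, ZMod.card, nsmul_eq_mul]
        norm_num

lemma card_mul_sum_le_mul_sq_sum_of_nonpos {ι : Type*} [Fintype ι] {K : ℝ} (hK : K ≤ 0)
    {f n : ι → ℝ} (h : ∀ a, f a ≤ K * n a ^ 2) :
    Fintype.card ι * ∑ a, f a ≤ K * (∑ a, n a) ^ 2 :=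
  calc Fintype.card ι * ∑ a, f a ≤ Fintype.card ι * ∑ a, K * n a ^ 2 := by
        gcongr with a; exact h a
    _ = K * (Fintype.card ι * ∑ a, n a ^ 2) := by rw [← mul_sum]; ring
    _ ≤ K * (∑ a, n a) ^ 2 := mul_le_mul_of_nonpos_left sq_sum_le_card_mul_sum_sq hK

theorem royden_lemma_nonpositive_general
    {V : Type*} [NormedAddCommGroup V] [InnerProductSpace ℂ V]
    (S : V → V → V → V → ℂ) (K : ℝ) (hK : K ≤ 0)
    (hlin1 : ∀ η σ ω, IsLinearMap ℂ fun ζ => S ζ η σ ω)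
    (hlin3 : ∀ ζ η ω, IsLinearMap ℂ fun σ => S ζ η σ ω)
    (hadd2 : ∀ ζ σ ω η₁ η₂, S ζ (η₁ + η₂) σ ω = S ζ η₁ σ ω + S ζ η₂ σ ω)
    (hsmul2 : ∀ ζ σ ω (c : ℂ) η, S ζ (c • η) σ ω = starRingEnd ℂ c * S ζ η σ ω)
    (hadd4 : ∀ ζ η σ ω₁ ω₂, S ζ η σ (ω₁ + ω₂) = S ζ η σ ω₁ + S ζ η σ ω₂)
    (hsmul4 : ∀ ζ η σ (c : ℂ) ω, S ζ η σ (c • ω) = starRingEnd ℂ c * S ζ η σ ω)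
    (hsym : ∀ ζ η σ ω, S ζ η σ ω = S σ η ζ ω)
    (hbound : ∀ ζ : V, (S ζ ζ ζ ζ).re ≤ K * ‖ζ‖ ^ 4)
    (ν : ℕ) (hν : 1 ≤ ν) (ζ : Fin ν → V)
    (horth : ∀ α β, α ≠ β → (inner ℂ (ζ α) (ζ β) : ℂ) = 0) :
    (∑ α, ∑ β, S (ζ α) (ζ α) (ζ β) (ζ β)).re ≤
      ((ν : ℝ) + 1) / (2 * ν) * K * (∑ α, ‖ζ α‖ ^ 2) ^ 2 := by
  have hS : IsSesquilinear₄ S := ⟨hlin1, hlin3, hadd2, hsmul2, hadd4, hsmul4⟩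
  have hpairs := hS.two_mul_sum_sub_sum_diag_re_le hsym hbound fun α β => horth α β
  have hdiag : ν * ∑ α, (S (ζ α) (ζ α) (ζ α) (ζ α)).re ≤ K * (∑ α, ‖ζ α‖ ^ 2) ^ 2 := by
    simpa using card_mul_sum_le_mul_sq_sum_of_nonpos hK fun α => (hbound (ζ α)).trans_eq (by ring)
  have hν₀ : (0 : ℝ) < ν := by exact_mod_cast hν
  rw [div_mul_eq_mul_div, div_mul_eq_mul_div, le_div_iff₀ (by positivity)]
  simp only [Complex.re_sum]
  linarith [mul_le_mul_of_nonneg_left hpairs hν₀.le]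

/-- **Royden's lemma (nonpositive bound case).**
Let `V` be a complex inner product space and `S` a symmetric bihermitian form on `V`.
If `K ≤ 0` and `S(ζ,ζ,ζ,ζ) ≤ K ‖ζ‖⁴` for all `ζ`, then for any finite family of
pairwise orthogonal vectors `ζ₁, …, ζ_ν` (with `ν ≥ 1`) one has
`∑_{α,β} S(ζ_α, ζ_α, ζ_β, ζ_β) ≤ ((ν+1)/(2ν)) K (∑_α ‖ζ_α‖²)²`. -/
theorem royden_lemma_nonpositive
    {V : Type*} [NormedAddCommGroup V] [InnerProductSpace ℂ V]
    (S : V → V → V → V → ℂ) (K : ℝ) (hK : K ≤ 0)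
    (hlin1 : ∀ η σ ω, IsLinearMap ℂ fun ζ => S ζ η σ ω)
    (hlin3 : ∀ ζ η ω, IsLinearMap ℂ fun σ => S ζ η σ ω)
    (hadd2 : ∀ ζ σ ω η₁ η₂, S ζ (η₁ + η₂) σ ω = S ζ η₁ σ ω + S ζ η₂ σ ω)
    (hsmul2 : ∀ ζ σ ω (c : ℂ) η, S ζ (c • η) σ ω = starRingEnd ℂ c * S ζ η σ ω)
    (hadd4 : ∀ ζ η σ ω₁ ω₂, S ζ η σ (ω₁ + ω₂) = S ζ η σ ω₁ + S ζ η σ ω₂)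
    (hsmul4 : ∀ ζ η σ (c : ℂ) ω, S ζ η σ (c • ω) = starRingEnd ℂ c * S ζ η σ ω)
    (hsym : ∀ ζ η σ ω, S ζ η σ ω = S σ η ζ ω)
    (hherm : ∀ ζ η σ ω, S η ζ ω σ = starRingEnd ℂ (S ζ η σ ω))
    (hbound : ∀ ζ : V, (S ζ ζ ζ ζ).re ≤ K * ‖ζ‖ ^ 4)
    (ν : ℕ) (hν : 1 ≤ ν) (ζ : Fin ν → V)
    (horth : ∀ α β, α ≠ β → (inner ℂ (ζ α) (ζ β) : ℂ) = 0) :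
    (∑ α, ∑ β, S (ζ α) (ζ α) (ζ β) (ζ β)).re ≤
      ((ν : ℝ) + 1) / (2 * ν) * K * (∑ α, ‖ζ α‖ ^ 2) ^ 2 :=
  royden_lemma_nonpositive_general S K hK hlin1 hlin3 hadd2 hsmul2 hadd4 hsmul4 hsym hbound ν hν ζ
    horth
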